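/- Let ψ(t) = e_{1+(k mod d)} for t ∈ [kΔt, (k+1)Δt), k ∈ ℕ, where e_i are standard basis vectors of ℝ^d and Δt > 0. Then ψ is persistently exciting: for all t ≥ 0, ∫_t^{t+dΔt} ψ(s)ψ(s)ᵀ ds ≥ (Δt/2)·I_d and ∫_t^{t+dΔt} ψ(s)ψ(s)ᵀ ds ≤ 2Δt·I_d (in the positive semidefinite order). -/

import Mathlib

/-!
On `[0, ∞)` the signal is `ψ s = e_{⌊s / Δt⌋ mod d}`, so every entry of `ψ ψᵀ` is a function of
`⌊s / Δt⌋ ∈ ZMod d`. Such a function is `d Δt`-periodic, hence its integral over any window of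
length `d Δt` equals the integral over `[0, d Δt]`, i.e. `Δt` times its sum over `ZMod d`.
The Gram matrix of the window is therefore exactly `Δt • 1`, which lies between `(Δt / 2) • 1`
and `(2 Δt) • 1`.
-/

open MeasureTheory Set

theorem ZMod.sum_range_natCast {M : Type*} [AddCommMonoid M] {d : ℕ} [NeZero d]
    (F : ZMod d → M) : ∑ k ∈ Finset.range d, F k = ∑ x, F x :=
  Finset.sum_nbij' (fun k => k) ZMod.val (by simp) (by simp [ZMod.val_lt])
    (fun k hk => ZMod.val_cast_of_lt (Finset.mem_range.mp hk)) (by simp) (by simp)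

section StepFunction

variable {E : Type*} [NormedAddCommGroup E]

theorem intervalIntegrable_comp_floor_intCast_add_one (F : ℤ → E) (k : ℤ) :
    IntervalIntegrable (fun u : ℝ => F ⌊u⌋) volume k (k + 1) :=
  intervalIntegrable_const.congr_uIoo fun u hu =>
    (congrArg F (Int.floor_eq_on_Ico k u (Ioo_subset_Ico_self
      (by rwa [uIoo_of_le (by linarith)] at hu)))).symm

variable [NormedSpace ℝ E] [CompleteSpace E]

theorem integral_comp_floor_intCast_add_one (F : ℤ → E) (k : ℤ) :
    ∫ u in (k : ℝ)..k + 1, F ⌊u⌋ = F k := by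
  rw [intervalIntegral.integral_congr_uIoo (g := fun _ => F k), intervalIntegral.integral_const,
    add_sub_cancel_left, one_smul]
  intro u hu
  rw [uIoo_of_le (by linarith)] at hu
  exact congrArg F (Int.floor_eq_on_Ico k u (Ioo_subset_Ico_self hu))

theorem integral_zmod_comp_floor_period {d : ℕ} [NeZero d] (F : ZMod d → E) (t : ℝ) :
    ∫ u in t..t + d, F ⌊u⌋ = ∑ x, F x := by
  have hper : Function.Periodic (fun u : ℝ => F ⌊u⌋) d := fun u => by
    simp [Int.floor_add_natCast]
  rw [hper.intervalIntegral_add_eq t 0, zero_add, ← ZMod.sum_range_natCast,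
    ← Nat.cast_zero, ← intervalIntegral.sum_integral_adjacent_intervals (a := Nat.cast)]
  · refine Finset.sum_congr rfl fun k _ => ?_
    simpa using integral_comp_floor_intCast_add_one (fun n : ℤ => F n) k
  · intro k _
    simpa using intervalIntegrable_comp_floor_intCast_add_one (fun n : ℤ => F n) k

theorem integral_zmod_comp_floor_div_period {d : ℕ} [NeZero d] (F : ZMod d → E)
    {Δt : ℝ} (hΔt : Δt ≠ 0) (t : ℝ) :
    ∫ s in t..t + d * Δt, F ⌊s / Δt⌋ = Δt • ∑ x, F x := by
  rw [intervalIntegral.integral_comp_div (fun u => F ⌊u⌋) hΔt, add_div,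
    mul_div_cancel_right₀ _ hΔt, integral_zmod_comp_floor_period]

end StepFunction

theorem mem_Ico_natFloor_div_mul {s Δt : ℝ} (hs : 0 ≤ s) (hΔt : 0 < Δt) :
    s ∈ Ico ((⌊s / Δt⌋₊ : ℝ) * Δt) ((⌊s / Δt⌋₊ + 1 : ℝ) * Δt) :=
  ⟨(le_div_iff₀ hΔt).mp (Nat.floor_le (div_nonneg hs hΔt.le)),
    (div_lt_iff₀ hΔt).mp (Nat.lt_floor_add_one _)⟩

section CyclingBasis

variable {d : ℕ} {Δt : ℝ} {ψ : ℝ → EuclideanSpace ℝ (Fin d)}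

theorem cycling_basis_apply (hd : 0 < d) (hΔt : 0 < Δt)
    (hψ : ∀ k : ℕ, ∀ s ∈ Ico ((k : ℝ) * Δt) ((k + 1 : ℝ) * Δt),
      ψ s = EuclideanSpace.single (⟨k % d, Nat.mod_lt k hd⟩ : Fin d) 1)
    {s : ℝ} (hs : 0 ≤ s) (i : Fin d) :
    ψ s i = if (⌊s / Δt⌋ : ZMod d) = ((i : ℕ) : ZMod d) then 1 else 0 := by
  rw [hψ _ s (mem_Ico_natFloor_div_mul hs hΔt), PiLp.single_apply,
    ← Int.natCast_floor_eq_floor (div_nonneg hs hΔt.le), Int.cast_natCast]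
  exact if_congr (by simp [Fin.ext_iff, ZMod.natCast_eq_natCast_iff', Nat.mod_eq_of_lt i.isLt,
    eq_comm]) rfl rfl

theorem integral_cycling_basis_mul_cycling_basis (hd : 0 < d) (hΔt : 0 < Δt)
    (hψ : ∀ k : ℕ, ∀ s ∈ Ico ((k : ℝ) * Δt) ((k + 1 : ℝ) * Δt),
      ψ s = EuclideanSpace.single (⟨k % d, Nat.mod_lt k hd⟩ : Fin d) 1)
    {t : ℝ} (ht : 0 ≤ t) (i j : Fin d) :
    ∫ s in t..(t + d * Δt), ψ s i * ψ s j = if i = j then Δt else 0 := by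
  have : NeZero d := ⟨hd.ne'⟩
  let F : ZMod d → ℝ := fun x =>
    (if x = ((i : ℕ) : ZMod d) then 1 else 0) * (if x = ((j : ℕ) : ZMod d) then 1 else 0)
  have hcongr : EqOn (fun s => ψ s i * ψ s j) (fun s => F ⌊s / Δt⌋) (uIcc t (t + d * Δt)) := by
    intro s hs
    rw [uIcc_of_le (le_add_of_nonneg_right (by positivity))] at hs
    simp only [F, cycling_basis_apply hd hΔt hψ (ht.trans hs.1)]
  rw [intervalIntegral.integral_congr hcongr, integral_zmod_comp_floor_div_period F hΔt.ne']
  have hinj : ((i : ℕ) : ZMod d) = ((j : ℕ) : ZMod d) ↔ i = j := by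
    rw [ZMod.natCast_eq_natCast_iff', Nat.mod_eq_of_lt i.isLt, Nat.mod_eq_of_lt j.isLt, Fin.val_inj]
  simp only [F, ite_mul, one_mul, zero_mul, Finset.sum_ite_eq', Finset.mem_univ, if_true, hinj]
  split_ifs <;> simp

end CyclingBasis

/-- The cycling coordinate signal `ψ(s) = e_{1 + (k mod d)}` for
`s ∈ [kΔt, (k+1)Δt)` is persistently exciting: over any window of length
`d·Δt` the matrix integral `∫ ψψᵀ` is bounded between `(Δt/2)·I` and
`2Δt·I` in the positive semidefinite (Loewner) order. -/
theorem cycling_basis_persistently_exciting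
    {d : ℕ} (hd : 0 < d) (Δt : ℝ) (hΔt : 0 < Δt)
    (ψ : ℝ → EuclideanSpace ℝ (Fin d))
    (hψ : ∀ k : ℕ, ∀ s ∈ Set.Ico ((k : ℝ) * Δt) ((k + 1 : ℝ) * Δt),
      ψ s = EuclideanSpace.single (⟨k % d, Nat.mod_lt k hd⟩ : Fin d) 1) :
    ∀ t : ℝ, 0 ≤ t →
      Matrix.PosSemidef
        ((Matrix.of fun i j : Fin d =>
          ∫ s in t..(t + d * Δt), ψ s i * ψ s j) - (Δt / 2) • (1 : Matrix (Fin d) (Fin d) ℝ)) ∧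
      Matrix.PosSemidef
        ((2 * Δt) • (1 : Matrix (Fin d) (Fin d) ℝ) -
          (Matrix.of fun i j : Fin d => ∫ s in t..(t + d * Δt), ψ s i * ψ s j)) := by
  intro t ht
  have hgram : (Matrix.of fun i j : Fin d => ∫ s in t..(t + d * Δt), ψ s i * ψ s j) =
      Δt • (1 : Matrix (Fin d) (Fin d) ℝ) := by
    ext i j
    simp [integral_cycling_basis_mul_cycling_basis hd hΔt hψ ht, Matrix.one_apply]
  rw [hgram, ← sub_smul, ← sub_smul]
  exact ⟨Matrix.PosSemidef.one.smul (by linarith), Matrix.PosSemidef.one.smul (by linarith)⟩
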